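/- Let n ≥ 2, let l₁, …, lₙ > 0 with lₙ > max_{1≤i≤n−1} l_i, and let ϱ > 0. For a tuple m = (m₁, …, m_{n−1}) of positive integers, set η(m) = (Σ_{i=1}^{n−1} (m_iπ/l_i)²)^{1/2}. For τ > 0 let A⁰(τ) be the number of such tuples m satisfying (2η(m)³/ϱ³)·[((sinh(η(m)lₙ))(cosh(η(m)lₙ)) + η(m)lₙ)/(sinh²(η(m)lₙ) − η(m)²lₙ²)] ≤ τ³. Then A⁰(τ)/τ^{n−1} → ω_{n−1}·(16^{1/3}·π)^{−(n−1)}·l₁⋯l_{n−1}·ϱ^{n−1} as τ → +∞. -/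

import Mathlib

open Filter

/-- `eta l m = (∑ᵢ (mᵢ π / lᵢ)²)^{1/2}` for a tuple `m` of integers. -/
noncomputable def eta {k : ℕ} (l : Fin (k + 1) → ℝ) (m : Fin k → ℕ) : ℝ :=
  Real.sqrt (∑ i : Fin k, ((m i : ℝ) * Real.pi / l i.castSucc) ^ 2)

/-- The cube of the biharmonic Steklov eigenvalue of the box associated with the
frequency `b`, height `L` and density `ϱ`:
`(2b³/ϱ³)·(sinh(bL)cosh(bL) + bL)/(sinh²(bL) − b²L²)`. -/
noncomputable def steklovCubed (b L ϱ : ℝ) : ℝ :=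
  (2 * b ^ 3 / ϱ ^ 3) *
    ((Real.sinh (b * L) * Real.cosh (b * L) + b * L) /
      (Real.sinh (b * L) ^ 2 - b ^ 2 * L ^ 2))

/-!
Put `c = ϱ / 2^{1/3}` and `g(x) = (sinh x cosh x + x)/(sinh² x − x²)`. Then
`λ³ = (η/c)³ g(η lₙ)`, where `g ≥ 1` and `g(x) → 1` as `x → ∞`. Hence `λ ≤ τ` forces
`η ≤ cτ`, while for every `s < 1` all but finitely many tuples with `η ≤ scτ` satisfy `λ ≤ τ`:
the counting function is squeezed between the numbers of positive lattice points in the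
ellipsoids `η ≤ scτ` and `η ≤ cτ`.

Comparing the half-open unit cubes below the lattice points with the ellipsoids, the number of
positive lattice points with `η ≤ R` is `vol(E) R^{n-1} + O(R^{n-2})`, where `E` is the part of
`{η ≤ 1}` in the positive orthant. Reflections in the coordinate hyperplanes show that `E`
carries the fraction `2^{-(n-1)}` of the ellipsoid, so `vol(E) = ω_{n-1} l₁⋯l_{n-1} / (2π)^{n-1}`.
-/

open MeasureTheory Set
open Real (sinh cosh)
open scoped ENNReal Topology

section LatticeCount

variable {ι : Type*}

def unitCube (m : ι → ℕ) : Set (ι → ℝ) :=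
  univ.pi fun i => Ioc ((m i : ℝ) - 1) (m i)

theorem mem_unitCube_ceil {x : ι → ℝ} (hx : ∀ i, 0 ≤ x i) : x ∈ unitCube fun i => ⌈x i⌉₊ :=
  fun i _ => ⟨sub_lt_iff_lt_add.2 (Nat.ceil_lt_add_one (hx i)), Nat.le_ceil _⟩

theorem pairwise_disjoint_unitCube : Pairwise (Function.onFun Disjoint (unitCube (ι := ι))) := by
  refine fun m m' hne => disjoint_left.2 fun x hx hx' => hne (funext fun i => ?_)
  have h : ⌈x i⌉ = m i := Int.ceil_eq_iff.2 (by exact_mod_cast hx i (mem_univ i))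
  have h' : ⌈x i⌉ = m' i := Int.ceil_eq_iff.2 (by exact_mod_cast hx' i (mem_univ i))
  exact_mod_cast h.symm.trans h'

variable [Fintype ι]

theorem EuclideanSpace.norm_toLp_le_of_abs_le {x y : ι → ℝ} (h : ∀ i, |x i| ≤ |y i|) :
    ‖WithLp.toLp 2 x‖ ≤ ‖WithLp.toLp 2 y‖ := by
  simp only [EuclideanSpace.norm_eq, Real.norm_eq_abs]
  exact Real.sqrt_le_sqrt (Finset.sum_le_sum fun i _ => pow_le_pow_left₀ (abs_nonneg _) (h i) 2)

def orthantEllipsoid (w : ι → ℝ) (R : ℝ) : Set (ι → ℝ) :=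
  {x | (∀ i, 0 ≤ x i) ∧ ‖WithLp.toLp 2 (fun i => w i * x i)‖ ≤ R}

def posLatticePoints (w : ι → ℝ) (R : ℝ) : Set (ι → ℕ) :=
  {m | (∀ i, 1 ≤ m i) ∧ ‖WithLp.toLp 2 (fun i => w i * m i)‖ ≤ R}

theorem measurableSet_unitCube (m : ι → ℕ) : MeasurableSet (unitCube m) :=
  .univ_pi fun _ => measurableSet_Ioc

theorem volume_biUnion_unitCube (s : Finset (ι → ℕ)) :
    volume (⋃ m ∈ s, unitCube m) = s.card := by
  rw [measure_biUnion_finset (pairwise_disjoint_unitCube.set_pairwise _)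
    fun m _ => measurableSet_unitCube m]
  simp [unitCube, Real.volume_pi_Ioc]

theorem volume_coordHyperplane (j : ι) : volume {x : ι → ℝ | x j = 0} = 0 := by
  rw [volume_pi]; exact Measure.pi_hyperplane _ j 0

theorem unitCube_subset_orthantEllipsoid {w : ι → ℝ} (hw : ∀ i, 0 < w i) {R : ℝ}
    {m : ι → ℕ} (hm : m ∈ posLatticePoints w R) : unitCube m ⊆ orthantEllipsoid w R := by
  intro x hx
  have hx0 : ∀ i, 0 ≤ x i := fun i => by
    have := (hx i (mem_univ i)).1
    have : (1 : ℝ) ≤ m i := by exact_mod_cast hm.1 i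
    linarith
  refine ⟨hx0, (EuclideanSpace.norm_toLp_le_of_abs_le fun i => ?_).trans hm.2⟩
  rw [abs_of_nonneg (mul_nonneg (hw i).le (hx0 i)),
    abs_of_nonneg (mul_nonneg (hw i).le (Nat.cast_nonneg _))]
  exact mul_le_mul_of_nonneg_left (hx i (mem_univ i)).2 (hw i).le

theorem ceil_mem_posLatticePoints {w : ι → ℝ} (hw : ∀ i, 0 < w i) {R : ℝ} {x : ι → ℝ}
    (hx : x ∈ orthantEllipsoid w (R - ‖WithLp.toLp 2 w‖)) (hpos : ∀ i, 0 < x i) :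
    (fun i => ⌈x i⌉₊) ∈ posLatticePoints w R := by
  refine ⟨fun i => Nat.one_le_iff_ne_zero.2 (Nat.ceil_pos.2 (hpos i)).ne', ?_⟩
  calc ‖WithLp.toLp 2 (fun i => w i * ⌈x i⌉₊)‖
      ≤ ‖WithLp.toLp 2 (fun i => w i * (x i + 1))‖ := by
        refine EuclideanSpace.norm_toLp_le_of_abs_le fun i => ?_
        rw [abs_of_nonneg (mul_nonneg (hw i).le (Nat.cast_nonneg _)),
          abs_of_nonneg (mul_nonneg (hw i).le (by linarith [hpos i]))]
        exact mul_le_mul_of_nonneg_left (Nat.ceil_lt_add_one (hpos i).le).le (hw i).le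
    _ = ‖WithLp.toLp 2 (fun i => w i * x i) + WithLp.toLp 2 w‖ := by
        simp only [mul_add_one]; rfl
    _ ≤ ‖WithLp.toLp 2 (fun i => w i * x i)‖ + ‖WithLp.toLp 2 w‖ := norm_add_le _ _
    _ ≤ R := by linarith [hx.2]

section Reflection

variable [DecidableEq ι]

def coordReflection (j : ι) (x : ι → ℝ) : ι → ℝ := fun i => if i = j then -x i else x i

theorem measurePreserving_coordReflection (j : ι) : MeasurePreserving (coordReflection j) := by
  rw [volume_pi]
  refine measurePreserving_pi _ _ (f := fun i (t : ℝ) => if i = j then -t else t) fun i => ?_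
  by_cases hij : i = j
  · simpa [hij] using Measure.measurePreserving_neg (volume : Measure ℝ)
  · simp only [hij, if_false]
    exact MeasurePreserving.id _

theorem volume_inter_setOf_nonneg_mul_two {S : Set (ι → ℝ)} (hS : MeasurableSet S) (j : ι)
    (hSj : coordReflection j ⁻¹' S = S) : volume (S ∩ {x | 0 ≤ x j}) * 2 = volume S := by
  set T := S ∩ {x | 0 ≤ x j}
  have hσ := measurePreserving_coordReflection j
  have hT : MeasurableSet T := hS.inter (measurableSet_le measurable_const (measurable_pi_apply j))
  have hrefl : ∀ x, coordReflection j x ∈ S ↔ x ∈ S := fun x => by rw [← mem_preimage, hSj]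
  have hunion : T ∪ coordReflection j ⁻¹' T = S := by
    ext x
    simp only [T, mem_union, mem_inter_iff, mem_preimage, hrefl, mem_ofPred_eq, coordReflection,
      ↓reduceIte, neg_nonneg]
    exact ⟨fun h => h.elim And.left And.left, fun hx => (le_total 0 (x j)).imp (⟨hx, ·⟩) (⟨hx, ·⟩)⟩
  have hinter : T ∩ coordReflection j ⁻¹' T ⊆ {x | x j = 0} := fun x hx => by
    have := hx.2.2
    simp only [mem_ofPred_eq, coordReflection, ↓reduceIte] at this
    exact le_antisymm (neg_nonneg.1 this) hx.1.2
  have hnull : volume (T ∩ coordReflection j ⁻¹' T) = 0 :=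
    measure_mono_null hinter (volume_coordHyperplane j)
  have := measure_union_add_inter (μ := volume) T (hσ.measurable hT)
  rw [hunion, hnull, add_zero, hσ.measure_preimage hT.nullMeasurableSet] at this
  rw [this, mul_two]

theorem volume_inter_orthant_mul_two_pow {S : Set (ι → ℝ)} (hS : MeasurableSet S)
    (hsymm : ∀ j, coordReflection j ⁻¹' S = S) (F : Finset ι) :
    volume (S ∩ {x | ∀ i ∈ F, 0 ≤ x i}) * 2 ^ F.card = volume S := by
  induction F using Finset.induction_on with
  | empty => simp
  | @insert j F hjF ih =>
    set T := S ∩ {x : ι → ℝ | ∀ i ∈ F, 0 ≤ x i}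
    have hT : MeasurableSet T := by
      refine hS.inter ?_
      simp only [ofPred_forall]
      exact .biInter F.countable_toSet fun i _ =>
        measurableSet_le measurable_const (measurable_pi_apply i)
    have hTj : coordReflection j ⁻¹' T = T := by
      ext x
      simp only [T, preimage_inter, hsymm j, mem_inter_iff, mem_preimage, mem_ofPred_eq,
        coordReflection]
      refine and_congr_right fun _ => forall₂_congr fun i hi => ?_
      rw [if_neg (ne_of_mem_of_not_mem hi hjF)]
    have hinsert : S ∩ {x | ∀ i ∈ insert j F, 0 ≤ x i} = T ∩ {x | 0 ≤ x j} := by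
      ext x
      simp only [T, Finset.forall_mem_insert, mem_inter_iff, mem_ofPred_eq]
      tauto
    rw [hinsert, Finset.card_insert_of_notMem hjF, pow_succ, mul_comm (2 ^ F.card), ← mul_assoc,
      volume_inter_setOf_nonneg_mul_two hT j hTj, ih]

end Reflection

theorem volume_orthant_unitBall_mul_two_pow :
    volume {x : ι → ℝ | (∀ i, 0 ≤ x i) ∧ ‖WithLp.toLp 2 x‖ ≤ 1} * 2 ^ Fintype.card ι
      = volume (Metric.ball (0 : EuclideanSpace ℝ ι) 1) := by
  classical
  set B := {x : ι → ℝ | ‖WithLp.toLp 2 x‖ ≤ 1}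
  have hB : B = WithLp.toLp 2 ⁻¹' Metric.closedBall 0 1 := by
    ext x; simp [B]
  have hBm : MeasurableSet B :=
    hB ▸ measurableSet_closedBall.preimage (PiLp.volume_preserving_toLp ι).measurable
  have hsymm : ∀ j, coordReflection j ⁻¹' B = B := fun j => by
    ext x
    simp only [B, mem_preimage, mem_ofPred_eq, EuclideanSpace.norm_eq, Real.norm_eq_abs,
      coordReflection, apply_ite, abs_neg, ite_self]
  have := volume_inter_orthant_mul_two_pow hBm hsymm Finset.univ
  simp only [Finset.mem_univ, true_implies, Finset.card_univ] at this
  have hset : {x : ι → ℝ | (∀ i, 0 ≤ x i) ∧ ‖WithLp.toLp 2 x‖ ≤ 1} = B ∩ {x | ∀ i, 0 ≤ x i} := by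
    ext x; simp only [B, mem_inter_iff, mem_ofPred_eq, and_comm]
  rw [hset, this, hB, (PiLp.volume_preserving_toLp ι).measure_preimage
    measurableSet_closedBall.nullMeasurableSet, Measure.addHaar_closedBall _ _ zero_le_one]
  simp

theorem volume_orthantEllipsoid_mul_two_pow {w : ι → ℝ} (hw : ∀ i, 0 < w i) {R : ℝ}
    (hR : 0 < R) :
    volume (orthantEllipsoid w R) * 2 ^ Fintype.card ι
      = ENNReal.ofReal (R ^ Fintype.card ι / ∏ i, w i)
          * volume (Metric.ball (0 : EuclideanSpace ℝ ι) 1) := by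
  classical
  set f := Matrix.toLin' (Matrix.diagonal fun i => w i / R)
  have hf : ∀ x, f x = fun i => w i / R * x i := fun x => by
    ext i; simp [f, Matrix.mulVec_diagonal]
  have hdet : LinearMap.det f = ∏ i, w i / R := by
    simp [f, LinearMap.det_toLin', Matrix.det_diagonal]
  have hpos : 0 < ∏ i, w i / R := Finset.prod_pos fun i _ => div_pos (hw i) hR
  have hpre : orthantEllipsoid w R
      = f ⁻¹' {x : ι → ℝ | (∀ i, 0 ≤ x i) ∧ ‖WithLp.toLp 2 x‖ ≤ 1} := by
    ext x
    have hscale : WithLp.toLp 2 (fun i => w i / R * x i)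
        = R⁻¹ • WithLp.toLp 2 (fun i => w i * x i) := by
      ext i; simp [div_eq_inv_mul, mul_assoc]
    simp only [orthantEllipsoid, mem_preimage, mem_ofPred_eq, hf, hscale, norm_smul,
      norm_inv, Real.norm_of_nonneg hR.le, inv_mul_le_iff₀ hR, mul_one,
      mul_nonneg_iff_of_pos_left (div_pos (hw _) hR)]
  rw [hpre, Measure.addHaar_preimage_linearMap _ (hdet ▸ hpos.ne'), mul_assoc,
    volume_orthant_unitBall_mul_two_pow, hdet, abs_of_pos (inv_pos.2 hpos),
    Finset.prod_div_distrib, Finset.prod_const, Finset.card_univ, inv_div]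

theorem volume_real_orthantEllipsoid {w : ι → ℝ} (hw : ∀ i, 0 < w i) {R : ℝ} (hR : 0 < R) :
    volume.real (orthantEllipsoid w R)
      = (volume (Metric.ball (0 : EuclideanSpace ℝ ι) 1)).toReal
          / (2 ^ Fintype.card ι * ∏ i, w i) * R ^ Fintype.card ι := by
  have h := congrArg ENNReal.toReal (volume_orthantEllipsoid_mul_two_pow hw hR)
  have hprod : 0 < ∏ i, w i := Finset.prod_pos fun i _ => hw i
  rw [ENNReal.toReal_mul, ENNReal.toReal_mul, ENNReal.toReal_ofReal (by positivity),
    ENNReal.toReal_pow, ENNReal.toReal_ofNat] at h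
  rw [measureReal_def]
  field_simp at h ⊢
  linear_combination h

theorem volume_orthantEllipsoid_ne_top {w : ι → ℝ} (hw : ∀ i, 0 < w i) {R : ℝ} (hR : 0 < R) :
    volume (orthantEllipsoid w R) ≠ ⊤ := by
  refine ne_top_of_le_ne_top ?_
    (le_mul_of_one_le_right' (one_le_pow₀ (M₀ := ℝ≥0∞) (n := Fintype.card ι) one_le_two))
  rw [volume_orthantEllipsoid_mul_two_pow hw hR]
  exact ENNReal.mul_ne_top ENNReal.ofReal_ne_top measure_ball_lt_top.ne

theorem finite_posLatticePoints {w : ι → ℝ} (hw : ∀ i, 0 < w i) (R : ℝ) :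
    (posLatticePoints w R).Finite := by
  classical
  refine (finite_Iic fun i => ⌈R / w i⌉₊).subset fun m hm i => ?_
  have := (PiLp.norm_apply_le (WithLp.toLp 2 (fun i => w i * (m i : ℝ))) i).trans hm.2
  rw [PiLp.toLp_apply, Real.norm_of_nonneg (by have := hw i; positivity)] at this
  exact Nat.cast_le.1 (((le_div_iff₀' (hw i)).2 this).trans (Nat.le_ceil _))

theorem ncard_posLatticePoints_le_volume {w : ι → ℝ} (hw : ∀ i, 0 < w i) (R : ℝ) :
    ((posLatticePoints w R).ncard : ℝ≥0∞) ≤ volume (orthantEllipsoid w R) := by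
  have hfin := finite_posLatticePoints hw R
  rw [Set.ncard_eq_toFinset_card _ hfin, ← volume_biUnion_unitCube]
  exact measure_mono (iUnion₂_subset fun m hm =>
    unitCube_subset_orthantEllipsoid hw (hfin.mem_toFinset.1 hm))

theorem volume_le_ncard_posLatticePoints {w : ι → ℝ} (hw : ∀ i, 0 < w i) (R : ℝ) :
    volume (orthantEllipsoid w (R - ‖WithLp.toLp 2 w‖)) ≤ (posLatticePoints w R).ncard := by
  have hfin := finite_posLatticePoints hw R
  have hsub : orthantEllipsoid w (R - ‖WithLp.toLp 2 w‖)
      ⊆ (⋃ m ∈ hfin.toFinset, unitCube m) ∪ ⋃ j, {x | x j = 0} := by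
    intro x hx
    by_cases hpos : ∀ i, 0 < x i
    · exact Or.inl (mem_biUnion (hfin.mem_toFinset.2 (ceil_mem_posLatticePoints hw hx hpos))
        (mem_unitCube_ceil hx.1))
    · obtain ⟨j, hj⟩ := not_forall.1 hpos
      exact Or.inr (mem_iUnion.2 ⟨j, le_antisymm (not_lt.1 hj) (hx.1 j)⟩)
  calc _ ≤ volume (⋃ m ∈ hfin.toFinset, unitCube m) + volume (⋃ j, {x : ι → ℝ | x j = 0}) :=
        (measure_mono hsub).trans (measure_union_le _ _)
    _ = (posLatticePoints w R).ncard := by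
        rw [measure_iUnion_null volume_coordHyperplane, add_zero, volume_biUnion_unitCube,
          Set.ncard_eq_toFinset_card _ hfin]

theorem tendsto_ncard_posLatticePoints_div_pow {w : ι → ℝ} (hw : ∀ i, 0 < w i) :
    Tendsto (fun R => ((posLatticePoints w R).ncard : ℝ) / R ^ Fintype.card ι) atTop
      (𝓝 ((volume (Metric.ball (0 : EuclideanSpace ℝ ι) 1)).toReal
        / (2 ^ Fintype.card ι * ∏ i, w i))) := by
  set V := (volume (Metric.ball (0 : EuclideanSpace ℝ ι) 1)).toReal
    / (2 ^ Fintype.card ι * ∏ i, w i)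
  set c := ‖WithLp.toLp 2 w‖
  have hlower : Tendsto (fun R => V * ((R - c) / R) ^ Fintype.card ι) atTop (𝓝 V) := by
    have h : Tendsto (fun R : ℝ => 1 - c * R⁻¹) atTop (𝓝 (1 - c * 0)) :=
      tendsto_const_nhds.sub (tendsto_inv_atTop_zero.const_mul c)
    rw [mul_zero, sub_zero] at h
    have h' : Tendsto (fun R => (R - c) / R) atTop (𝓝 1) := h.congr' <| by
      filter_upwards [eventually_ne_atTop 0] with R hR
      field_simp
    simpa using (h'.pow (Fintype.card ι)).const_mul V
  refine tendsto_of_tendsto_of_tendsto_of_le_of_le' hlower tendsto_const_nhds ?_ ?_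
  · filter_upwards [eventually_gt_atTop c, eventually_gt_atTop 0] with R hRc hR
    rw [div_pow, ← mul_div_assoc, div_le_div_iff_of_pos_right (by positivity),
      ← volume_real_orthantEllipsoid hw (sub_pos.2 hRc)]
    exact ENNReal.toReal_mono (ENNReal.natCast_ne_top _) (volume_le_ncard_posLatticePoints hw R)
  · filter_upwards [eventually_gt_atTop 0] with R hR
    rw [div_le_iff₀ (by positivity), ← volume_real_orthantEllipsoid hw hR]
    exact ENNReal.toReal_mono (volume_orthantEllipsoid_ne_top hw hR)
      (ncard_posLatticePoints_le_volume hw R)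

end LatticeCount

noncomputable def steklovFactor (x : ℝ) : ℝ :=
  (sinh x * cosh x + x) / (sinh x ^ 2 - x ^ 2)

theorem one_le_steklovFactor {x : ℝ} (hx : 0 < x) : 1 ≤ steklovFactor x := by
  have hsinh : x < sinh x := Real.self_lt_sinh_iff.2 hx
  have hden : 0 < sinh x ^ 2 - x ^ 2 := by nlinarith
  have hgap : 0 < sinh x * (cosh x - sinh x) := by
    rw [Real.cosh_sub_sinh]; exact mul_pos (hx.trans hsinh) (Real.exp_pos _)
  rw [steklovFactor, one_le_div hden]
  nlinarith

/-- Numerator and denominator multiplied by `4 e^{-2x}`: all terms but the `1`s tend to `0`. -/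
theorem steklovFactor_eq_exp_neg (x : ℝ) :
    steklovFactor x = (1 - Real.exp (-x) ^ 4 + 4 * (x * Real.exp (-x)) * Real.exp (-x))
      / (1 - 2 * Real.exp (-x) ^ 2 + Real.exp (-x) ^ 4
          - 4 * (x ^ 2 * Real.exp (-x)) * Real.exp (-x)) := by
  have h := (Real.exp_pos x).ne'
  rw [steklovFactor, Real.sinh_eq, Real.cosh_eq, Real.exp_neg]
  field_simp
  ring

theorem tendsto_steklovFactor_atTop : Tendsto steklovFactor atTop (𝓝 1) := by
  have hv := Real.tendsto_exp_neg_atTop_nhds_zero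
  have h1 : Tendsto (fun x => x * Real.exp (-x)) atTop (𝓝 0) := by
    simpa using Real.tendsto_pow_mul_exp_neg_atTop_nhds_zero 1
  have h2 := Real.tendsto_pow_mul_exp_neg_atTop_nhds_zero 2
  have hnum := (tendsto_const_nhds (x := (1 : ℝ))).sub (hv.pow 4) |>.add ((h1.const_mul 4).mul hv)
  have hden := (tendsto_const_nhds (x := (1 : ℝ))).sub ((hv.pow 2).const_mul 2) |>.add (hv.pow 4)
    |>.sub ((h2.const_mul 4).mul hv)
  convert hnum.div hden (by norm_num) using 1
  · exact funext steklovFactor_eq_exp_neg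
  · norm_num

theorem steklovCubed_eq (b L ϱ : ℝ) :
    steklovCubed b L ϱ = (b / (ϱ / 2 ^ (1 / 3 : ℝ))) ^ 3 * steklovFactor (b * L) := by
  have h : ((2 : ℝ) ^ (1 / 3 : ℝ)) ^ 3 = 2 := by
    rw [← Real.rpow_natCast, ← Real.rpow_mul zero_le_two]
    norm_num
  rw [steklovCubed, steklovFactor, div_div_eq_mul_div, div_pow, mul_pow, h, mul_pow]
  ring

theorem le_mul_of_steklovCubed_le {b L ϱ τ : ℝ} (hb : 0 ≤ b) (hL : 0 < L) (hϱ : 0 < ϱ)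
    (hτ : 0 ≤ τ) (h : steklovCubed b L ϱ ≤ τ ^ 3) : b ≤ ϱ / 2 ^ (1 / 3 : ℝ) * τ := by
  have hc : 0 < ϱ / 2 ^ (1 / 3 : ℝ) := by positivity
  rcases hb.eq_or_lt with rfl | hb
  · positivity
  rw [← div_le_iff₀' hc, ← pow_le_pow_iff_left₀ (by positivity) hτ three_ne_zero]
  rw [steklovCubed_eq] at h
  exact (le_mul_of_one_le_right (by positivity) (one_le_steklovFactor (by positivity))).trans h

theorem steklovCubed_le_of_le {b L ϱ τ s : ℝ} (hb : 0 ≤ b) (hϱ : 0 < ϱ) (hs : 0 < s)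
    (hfactor : steklovFactor (b * L) ≤ s⁻¹ ^ 3) (hbτ : b ≤ s * (ϱ / 2 ^ (1 / 3 : ℝ)) * τ) :
    steklovCubed b L ϱ ≤ τ ^ 3 := by
  have hc : 0 < ϱ / 2 ^ (1 / 3 : ℝ) := by positivity
  rw [steklovCubed_eq]
  calc _ ≤ (b / (ϱ / 2 ^ (1 / 3 : ℝ))) ^ 3 * s⁻¹ ^ 3 := by gcongr
    _ = (b / (s * (ϱ / 2 ^ (1 / 3 : ℝ)))) ^ 3 := by field_simp
    _ ≤ τ ^ 3 := by
      gcongr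
      rwa [div_le_iff₀' (by positivity)]

theorem tendsto_comp_const_mul_div_pow {N : ℝ → ℝ} {V d : ℝ} {k : ℕ}
    (hN : Tendsto (fun R => N R / R ^ k) atTop (𝓝 V)) (hd : 0 < d) :
    Tendsto (fun τ => N (d * τ) / τ ^ k) atTop (𝓝 (V * d ^ k)) := by
  refine ((hN.comp (tendsto_id.const_mul_atTop hd)).mul_const (d ^ k)).congr' ?_
  filter_upwards [eventually_gt_atTop 0] with τ hτ
  simp only [Function.comp_apply, id, mul_pow]
  field_simp

theorem tendsto_div_pow_of_squeeze {F N : ℝ → ℝ} {V c : ℝ} {k : ℕ} (hk : k ≠ 0) (hc : 0 < c)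
    (hN : Tendsto (fun R => N R / R ^ k) atTop (𝓝 V))
    (hupper : ∀ᶠ τ in atTop, F τ ≤ N (c * τ))
    (hlower : ∀ s ∈ Ioo (0 : ℝ) 1, ∃ C, ∀ᶠ τ in atTop, N (s * c * τ) ≤ F τ + C) :
    Tendsto (fun τ => F τ / τ ^ k) atTop (𝓝 (V * c ^ k)) := by
  refine tendsto_order.2 ⟨fun b hb => ?_, fun b hb => ?_⟩
  · obtain ⟨s, hs, hbs⟩ : ∃ s ∈ Ioo (0 : ℝ) 1, b < V * (s * c) ^ k := by
      have hcont : Tendsto (fun s => V * (s * c) ^ k) (𝓝[<] 1) (𝓝 (V * c ^ k)) := by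
        simpa using ((continuous_id.mul continuous_const).pow k |>.const_mul V).tendsto 1
          |>.mono_left nhdsWithin_le_nhds
      obtain ⟨s, hbs, hs⟩ := ((hcont.eventually (lt_mem_nhds hb)).and
        (Ioo_mem_nhdsLT zero_lt_one)).exists
      exact ⟨s, hs, hbs⟩
    obtain ⟨C, hC⟩ := hlower s hs
    have hlim : Tendsto (fun τ => N (s * c * τ) / τ ^ k - C / τ ^ k) atTop
        (𝓝 (V * (s * c) ^ k - 0)) :=
      (tendsto_comp_const_mul_div_pow hN (mul_pos hs.1 hc)).sub
        (tendsto_const_nhds.div_atTop (tendsto_pow_atTop hk))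
    filter_upwards [hlim.eventually (lt_mem_nhds (by rwa [sub_zero])), hC,
      eventually_gt_atTop 0] with τ hlt hle hτ
    calc b < (N (s * c * τ) - C) / τ ^ k := by rwa [sub_div]
      _ ≤ F τ / τ ^ k := by gcongr; linarith
  · filter_upwards [(tendsto_comp_const_mul_div_pow hN hc).eventually (gt_mem_nhds hb), hupper,
      eventually_gt_atTop 0] with τ hlt hle hτ
    exact (div_le_div_of_nonneg_right hle (by positivity)).trans_lt hlt

section SteklovCount

variable {ι : Type*} [Fintype ι]

def steklovLatticePoints (w : ι → ℝ) (L ϱ τ : ℝ) : Set (ι → ℕ) :=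
  {m | (∀ i, 1 ≤ m i) ∧ steklovCubed ‖WithLp.toLp 2 (fun i => w i * m i)‖ L ϱ ≤ τ ^ 3}

theorem steklovLatticePoints_subset {w : ι → ℝ} {L ϱ τ : ℝ} (hL : 0 < L) (hϱ : 0 < ϱ)
    (hτ : 0 ≤ τ) :
    steklovLatticePoints w L ϱ τ ⊆ posLatticePoints w (ϱ / 2 ^ (1 / 3 : ℝ) * τ) :=
  fun _ hm => ⟨hm.1, le_mul_of_steklovCubed_le (norm_nonneg _) hL hϱ hτ hm.2⟩

theorem posLatticePoints_subset_union {w : ι → ℝ} {L ϱ τ s x₀ : ℝ} (hL : 0 < L) (hϱ : 0 < ϱ)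
    (hs : 0 < s) (hx₀ : ∀ x ≥ x₀, steklovFactor x ≤ s⁻¹ ^ 3) :
    posLatticePoints w (s * (ϱ / 2 ^ (1 / 3 : ℝ)) * τ)
      ⊆ steklovLatticePoints w L ϱ τ ∪ posLatticePoints w (x₀ / L) := by
  intro m hm
  by_cases hsmall : ‖WithLp.toLp 2 (fun i => w i * m i)‖ ≤ x₀ / L
  · exact Or.inr ⟨hm.1, hsmall⟩
  · refine Or.inl ⟨hm.1, steklovCubed_le_of_le (norm_nonneg _) hϱ hs (hx₀ _ ?_) hm.2⟩
    exact ((div_le_iff₀ hL).1 (not_le.1 hsmall).le)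

theorem tendsto_ncard_steklovLatticePoints_div_pow {w : ι → ℝ} {L ϱ : ℝ}
    (hι : Fintype.card ι ≠ 0) (hw : ∀ i, 0 < w i) (hL : 0 < L) (hϱ : 0 < ϱ) :
    Tendsto (fun τ => ((steklovLatticePoints w L ϱ τ).ncard : ℝ) / τ ^ Fintype.card ι) atTop
      (𝓝 ((volume (Metric.ball (0 : EuclideanSpace ℝ ι) 1)).toReal
        / (2 ^ Fintype.card ι * ∏ i, w i) * (ϱ / 2 ^ (1 / 3 : ℝ)) ^ Fintype.card ι)) := by
  refine tendsto_div_pow_of_squeeze (N := fun R => (posLatticePoints w R).ncard) hι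
    (by positivity) (tendsto_ncard_posLatticePoints_div_pow hw) ?_ fun s hs => ?_
  · filter_upwards [eventually_ge_atTop 0] with τ hτ
    exact_mod_cast ncard_le_ncard (steklovLatticePoints_subset hL hϱ hτ)
      (finite_posLatticePoints hw _)
  obtain ⟨x₀, hx₀⟩ := (tendsto_steklovFactor_atTop.eventually (eventually_le_nhds
    (one_lt_pow₀ (one_lt_inv₀ hs.1 |>.2 hs.2) three_ne_zero))).exists_forall_of_atTop
  refine ⟨(posLatticePoints w (x₀ / L)).ncard, ?_⟩
  filter_upwards [eventually_ge_atTop 0] with τ hτ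
  have hfin := (finite_posLatticePoints hw _).subset (steklovLatticePoints_subset hL hϱ hτ)
  exact_mod_cast (ncard_le_ncard (posLatticePoints_subset_union hL hϱ hs.1 hx₀)
    (hfin.union (finite_posLatticePoints hw _))).trans (ncard_union_le _ _)

end SteklovCount

theorem eta_eq_norm {k : ℕ} (l : Fin (k + 1) → ℝ) (m : Fin k → ℕ) :
    eta l m = ‖WithLp.toLp 2 (fun i => Real.pi / l i.castSucc * m i)‖ := by
  simp only [eta, EuclideanSpace.norm_eq, Real.norm_eq_abs, sq_abs]
  congr 1
  exact Finset.sum_congr rfl fun i _ => by ring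

theorem weyl_constant_eq {k : ℕ} {l : Fin k → ℝ} (hl : ∀ i, 0 < l i) (ω ϱ : ℝ) :
    ω * (((16 : ℝ) ^ ((1 : ℝ) / 3) * Real.pi)⁻¹) ^ k * (∏ i, l i) * ϱ ^ k
      = ω / (2 ^ k * ∏ i, Real.pi / l i) * (ϱ / 2 ^ (1 / 3 : ℝ)) ^ k := by
  have h16 : (16 : ℝ) ^ ((1 : ℝ) / 3) = 2 * 2 ^ (1 / 3 : ℝ) := by
    rw [show (16 : ℝ) = 2 ^ 3 * 2 by norm_num, Real.mul_rpow (by positivity) zero_le_two,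
      ← Real.rpow_natCast, ← Real.rpow_mul zero_le_two]
    norm_num
  have : 0 < ∏ i, l i := Finset.prod_pos fun i _ => hl i
  have := Real.pi_pos
  have : 0 < (2 : ℝ) ^ (1 / 3 : ℝ) := by positivity
  rw [h16, Finset.prod_div_distrib, Finset.prod_const, Finset.card_univ, Fintype.card_fin]
  simp only [mul_inv, mul_pow, div_pow, inv_pow]
  field_simp

theorem box_counting_function_asymptotics_dirichlet_general
    (k : ℕ) (hk : 1 ≤ k) (l : Fin (k + 1) → ℝ) (hl : ∀ i, 0 < l i)
    (ϱ : ℝ) (hϱ : 0 < ϱ) :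
    Tendsto (fun τ : ℝ =>
        (Set.ncard {m : Fin k → ℕ |
            (∀ i, 1 ≤ m i) ∧
            steklovCubed (eta l m) (l (Fin.last k)) ϱ ≤ τ ^ 3} : ℝ) / τ ^ k)
      atTop
      (nhds ((MeasureTheory.volume
          (Metric.ball (0 : EuclideanSpace ℝ (Fin k)) 1)).toReal *
        (((16 : ℝ) ^ ((1 : ℝ) / 3) * Real.pi)⁻¹) ^ k *
        (∏ i : Fin k, l i.castSucc) * ϱ ^ k)) := by
  have hw : ∀ i : Fin k, 0 < Real.pi / l i.castSucc := fun i => div_pos Real.pi_pos (hl _)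
  have hlim := tendsto_ncard_steklovLatticePoints_div_pow (by simp; omega) hw (hl (Fin.last k)) hϱ
  rw [Fintype.card_fin] at hlim
  rw [weyl_constant_eq fun i => hl i.castSucc]
  simp only [eta_eq_norm]
  exact hlim

/-- Weyl-type asymptotics of the counting function `A⁰(τ)` of the biharmonic
Steklov eigenvalues of the box `[0,l₁]×⋯×[0,l_{k+1}]` (Dirichlet-type lateral
boundary conditions, positive-integer tuples `m`):
`A⁰(τ)/τ^k → ω_k (16^{1/3}π)^{−k} l₁⋯l_k ϱ^k` as `τ → ∞` (here `k = n − 1 ≥ 1`). -/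
theorem box_counting_function_asymptotics_dirichlet
    (k : ℕ) (hk : 1 ≤ k) (l : Fin (k + 1) → ℝ) (hl : ∀ i, 0 < l i)
    (hln : ∀ i : Fin k, l i.castSucc < l (Fin.last k))
    (ϱ : ℝ) (hϱ : 0 < ϱ) :
    Tendsto (fun τ : ℝ =>
        (Set.ncard {m : Fin k → ℕ |
            (∀ i, 1 ≤ m i) ∧
            steklovCubed (eta l m) (l (Fin.last k)) ϱ ≤ τ ^ 3} : ℝ) / τ ^ k)
      atTop
      (nhds ((MeasureTheory.volume
          (Metric.ball (0 : EuclideanSpace ℝ (Fin k)) 1)).toReal *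
        (((16 : ℝ) ^ ((1 : ℝ) / 3) * Real.pi)⁻¹) ^ k *
        (∏ i : Fin k, l i.castSucc) * ϱ ^ k)) :=
  box_counting_function_asymptotics_dirichlet_general k hk l hl ϱ hϱ
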